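/- For every γ ∈ (0,∞) there exist constants c', γ' ∈ (0,∞), depending only on c_Ψ, β₁, β₂ and γ, such that for all r, t ∈ (0,∞), exp(−Φ(γ r, t)) ≤ c' exp(−γ' (Ψ(r)/t)^{1/(β₂−1)}). -/

import Mathlib

/-!
Testing `Φ(γr, t)` at `ρ = r/λ` with `λ ≥ 1`, the upper scaling bound `Ψ(r)/Ψ(r/λ) ≤ c_Ψ λ^{β₂}`
gives `Φ(γr, t) ≥ γλ - c_Ψ λ^{β₂}/A` with `A = Ψ(r)/t`. The optimal choice
`λ^{β₂-1} = γA/(c_Ψ β₂)` turns this into `γ(1 - 1/β₂) λ`, a constant multiple of `A^{1/(β₂-1)}`.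
When that `λ` is below `1` the target exponent is at most `γ`, and it suffices that `Φ ≥ -1`,
which holds at any `ρ` with `Ψ(ρ) ≥ t`. The lower scaling bound (`β₁ > 1`) provides such `ρ` and
keeps the supremum finite, so that `Φ` is not the junk value of an unbounded real `⨆`.
-/

open Filter Set

open scoped NNReal

noncomputable def Phi (ψ : ℝ≥0 → ℝ≥0) (R t : ℝ) : ℝ :=
  ⨆ ρ : {ρ : ℝ≥0 // 0 < ρ}, (R / (ρ.1 : ℝ) - t / (ψ ρ.1 : ℝ))

def LowerScaling (c β : ℝ) (ψ : ℝ≥0 → ℝ≥0) : Prop :=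
  ∀ r R : ℝ≥0, 0 < r → r ≤ R → c⁻¹ * ((R : ℝ) / r) ^ β ≤ (ψ R : ℝ) / ψ r

def UpperScaling (c β : ℝ) (ψ : ℝ≥0 → ℝ≥0) : Prop :=
  ∀ r R : ℝ≥0, 0 < r → r ≤ R → (ψ R : ℝ) / ψ r ≤ c * ((R : ℝ) / r) ^ β

noncomputable def phiConst (c β γ : ℝ) : ℝ :=
  γ * (1 - β⁻¹) * (γ / (c * β)) ^ (β - 1)⁻¹

theorem phiConst_pos {c β γ : ℝ} (hc : 0 < c) (hβ : 1 < β) (hγ : 0 < γ) :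
    0 < phiConst c β γ := by
  have : 0 < 1 - β⁻¹ := sub_pos.2 (inv_lt_one_of_one_lt₀ hβ)
  unfold phiConst
  positivity

theorem phiConst_mul_rpow {c β γ A : ℝ} (hc : 0 < c) (hβ : 0 < β) (hγ : 0 < γ) (hA : 0 ≤ A) :
    phiConst c β γ * A ^ (β - 1)⁻¹ = γ * (1 - β⁻¹) * (γ * A / (c * β)) ^ (β - 1)⁻¹ := by
  rw [phiConst, mul_div_right_comm, Real.mul_rpow (by positivity) hA, mul_assoc]

theorem mul_sub_mul_rpow_le {a b β x : ℝ} (ha : 0 ≤ a) (hb : 0 < b) (hβ : 1 < β) (hx : 0 ≤ x) :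
    a * x - b * x ^ β ≤ a * (a / b) ^ (β - 1)⁻¹ := by
  set x₀ := (a / b) ^ (β - 1)⁻¹
  rcases le_or_gt x x₀ with hle | hlt
  · have : 0 ≤ b * x ^ β := by positivity
    nlinarith
  · have hx₀ : x₀ ^ (β - 1) = a / b := Real.rpow_inv_rpow (by positivity) (by linarith)
    have hpow : a / b ≤ x ^ (β - 1) :=
      hx₀ ▸ Real.rpow_le_rpow (by positivity) hlt.le (by linarith)
    have hx' : 0 < x := (by positivity : 0 ≤ x₀).trans_lt hlt
    have : a * x ≤ b * x ^ β :=
      calc a * x = b * (a / b) * x := by field_simp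
        _ ≤ b * x ^ (β - 1) * x := by gcongr
        _ = b * x ^ β := by rw [mul_assoc, ← Real.rpow_add_one hx'.ne', sub_add_cancel]
    have : 0 ≤ a * x₀ := by positivity
    linarith

/-- The value of `γλ - cλ^β/A` at its maximiser. -/
theorem mul_sub_rpow_div_eq_of_rpow_eq {c β γ A l : ℝ} (hc : c ≠ 0) (hβ : β ≠ 0) (hA : A ≠ 0)
    (hl : l ≠ 0) (hlA : l ^ (β - 1) = γ * A / (c * β)) :
    γ * l - c * l ^ β / A = γ * (1 - β⁻¹) * l := by
  have hsplit : l ^ β = l ^ (β - 1) * l := by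
    rw [← Real.rpow_add_one hl (β - 1), sub_add_cancel]
  rw [hsplit, hlA]
  field_simp

theorem le_Phi {ψ : ℝ≥0 → ℝ≥0} {R t : ℝ}
    (hbdd : BddAbove (range fun ρ : {ρ : ℝ≥0 // 0 < ρ} => R / (ρ.1 : ℝ) - t / (ψ ρ.1 : ℝ)))
    {ρ : ℝ≥0} (hρ : 0 < ρ) :
    R / (ρ : ℝ) - t / (ψ ρ : ℝ) ≤ Phi ψ R t :=
  le_ciSup hbdd ⟨ρ, hρ⟩

theorem neg_one_le_Phi {ψ : ℝ≥0 → ℝ≥0} {R t : ℝ}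
    (hbdd : BddAbove (range fun ρ : {ρ : ℝ≥0 // 0 < ρ} => R / (ρ.1 : ℝ) - t / (ψ ρ.1 : ℝ)))
    (hR : 0 ≤ R) (hψ : ∃ ρ : ℝ≥0, 0 < ρ ∧ t ≤ ψ ρ) :
    -1 ≤ Phi ψ R t := by
  obtain ⟨ρ, hρ, htρ⟩ := hψ
  have h₁ : 0 ≤ R / (ρ : ℝ) := by positivity
  have h₂ : t / (ψ ρ : ℝ) ≤ 1 := div_le_one_of_le₀ htρ (ψ ρ).coe_nonneg
  linarith [le_Phi hbdd hρ]

namespace LowerScaling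

variable {c β : ℝ} {ψ : ℝ≥0 → ℝ≥0}

theorem pos (hc : 0 < c) (hψ : LowerScaling c β ψ) {r : ℝ≥0} (hr : 0 < r) : 0 < (ψ r : ℝ) := by
  -- if `ψ r = 0`, the ratio `ψ r / ψ r` is the junk value `0`, below `c⁻¹ > 0`
  refine (ψ r).coe_nonneg.lt_of_ne fun h => ?_
  have := hψ r r hr le_rfl
  rw [← h, div_zero] at this
  have : 0 < c⁻¹ * ((r : ℝ) / r) ^ β := by
    rw [div_self (NNReal.coe_pos.2 hr).ne', Real.one_rpow, mul_one]
    exact inv_pos.2 hc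
  linarith

theorem mul_rpow_le_div (hc : 0 < c) (hψ : LowerScaling c β ψ) {ρ r : ℝ≥0} (hρ : 0 < ρ)
    (hρr : ρ ≤ r) {t : ℝ} (ht : 0 ≤ t) :
    t / (c * ψ r) * ((r : ℝ) / ρ) ^ β ≤ t / (ψ ρ : ℝ) := by
  have hρ' := hψ.pos hc hρ
  have hr' := hψ.pos hc (hρ.trans_le hρr)
  calc t / (c * ψ r) * ((r : ℝ) / ρ) ^ β
      = t / ψ r * (c⁻¹ * ((r : ℝ) / ρ) ^ β) := by field_simp
    _ ≤ t / ψ r * ((ψ r : ℝ) / ψ ρ) := by gcongr; exact hψ ρ r hρ hρr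
    _ = t / (ψ ρ : ℝ) := by field_simp

theorem exists_le_apply (hc : 0 < c) (hβ : 0 < β) (hψ : LowerScaling c β ψ) (y : ℝ) :
    ∃ ρ : ℝ≥0, 0 < ρ ∧ y ≤ ψ ρ := by
  have hψ₁ := hψ.pos hc one_pos
  have hgrowth : Tendsto (fun ρ : ℝ≥0 => c⁻¹ * ((ρ : ℝ) / 1) ^ β * ψ 1) atTop atTop := by
    simp only [div_one]
    exact ((tendsto_rpow_atTop hβ).comp (NNReal.tendsto_coe_atTop.2 tendsto_id)
      |>.const_mul_atTop (inv_pos.2 hc)).atTop_mul_const hψ₁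
  obtain ⟨ρ, hyρ, hρ⟩ := (hgrowth.eventually_ge_atTop y |>.and (eventually_ge_atTop 1)).exists
  refine ⟨ρ, one_pos.trans_le hρ, hyρ.trans ?_⟩
  exact (le_div_iff₀ hψ₁).1 (hψ 1 ρ one_pos hρ)

theorem bddAbove_range (hc : 0 < c) (hβ : 1 < β) (hψ : LowerScaling c β ψ) {R t : ℝ}
    (hR : 0 ≤ R) (ht : 0 < t) :
    BddAbove (range fun ρ : {ρ : ℝ≥0 // 0 < ρ} => R / (ρ.1 : ℝ) - t / (ψ ρ.1 : ℝ)) := by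
  set b := t / (c * ψ 1)
  have hb : 0 < b := div_pos ht (mul_pos hc (hψ.pos hc one_pos))
  refine ⟨max R (R * (R / b) ^ (β - 1)⁻¹), ?_⟩
  rintro _ ⟨⟨ρ, hρ⟩, rfl⟩
  have hρ' : (0 : ℝ) < ρ := hρ
  have htψ : 0 ≤ t / (ψ ρ : ℝ) := div_nonneg ht.le (ψ ρ).coe_nonneg
  rcases le_total 1 ρ with h1ρ | hρ1
  · have : R / (ρ : ℝ) ≤ R := div_le_self hR (by exact_mod_cast h1ρ)
    exact le_max_of_le_left (by linarith)
  · have hdecay := hψ.mul_rpow_le_div hc hρ hρ1 ht.le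
    have hyoung := mul_sub_mul_rpow_le hR hb hβ (by positivity : (0 : ℝ) ≤ 1 / ρ)
    rw [NNReal.coe_one] at hdecay
    have : R / (ρ : ℝ) = R * (1 / ρ) := (mul_one_div R _).symm
    exact le_max_of_le_right (by dsimp only; linarith)

end LowerScaling

theorem UpperScaling.le_Phi {c β γ : ℝ} {ψ : ℝ≥0 → ℝ≥0} (hψ : UpperScaling c β ψ)
    (hψ₀ : ∀ ρ : ℝ≥0, 0 < ρ → 0 < (ψ ρ : ℝ)) {r : ℝ≥0} (hr : 0 < r) {t : ℝ} (ht : 0 ≤ t)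
    (hbdd : BddAbove
      (range fun ρ : {ρ : ℝ≥0 // 0 < ρ} => γ * r / (ρ.1 : ℝ) - t / (ψ ρ.1 : ℝ)))
    {l : ℝ} (hl : 1 ≤ l) :
    γ * l - c * l ^ β / ((ψ r : ℝ) / t) ≤ Phi ψ (γ * r) t := by
  have hr' : (0 : ℝ) < r := hr
  have hl₀ : 0 < l := one_pos.trans_le hl
  set ρ : ℝ≥0 := ((r : ℝ) / l).toNNReal
  have hρ : (ρ : ℝ) = r / l := Real.coe_toNNReal _ (by positivity)
  have hρ₀ : 0 < ρ := by rw [← NNReal.coe_pos, hρ]; positivity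
  have hρr : ρ ≤ r := by
    rw [← NNReal.coe_le_coe, hρ]
    exact div_le_self hr'.le hl
  have hratio : (r : ℝ) / ρ = l := by rw [hρ]; field_simp
  have hψρ := hψ₀ ρ hρ₀
  have hψr := hψ₀ r hr
  have hdecay : t / (ψ ρ : ℝ) ≤ c * l ^ β / ((ψ r : ℝ) / t) :=
    calc t / (ψ ρ : ℝ) = t / ψ r * ((ψ r : ℝ) / ψ ρ) := by field_simp
      _ ≤ t / ψ r * (c * l ^ β) := by
          gcongr
          simpa only [hratio] using hψ ρ r hρ₀ hρr
      _ = c * l ^ β / ((ψ r : ℝ) / t) := by rw [div_div_eq_mul_div]; ring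
  have := _root_.le_Phi hbdd hρ₀
  rw [mul_div_assoc, hratio] at this
  linarith

theorem phiConst_mul_rpow_sub_le_Phi {c β₁ β₂ γ : ℝ} {ψ : ℝ≥0 → ℝ≥0} (hc : 0 < c)
    (hβ₁ : 1 < β₁) (hβ₂ : 1 < β₂) (hγ : 0 < γ) (hlow : LowerScaling c β₁ ψ)
    (hup : UpperScaling c β₂ ψ) {r : ℝ≥0} (hr : 0 < r) {t : ℝ} (ht : 0 < t) :
    phiConst c β₂ γ * ((ψ r : ℝ) / t) ^ (β₂ - 1)⁻¹ - (γ + 1) ≤ Phi ψ (γ * r) t := by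
  have hψ₀ : ∀ ρ : ℝ≥0, 0 < ρ → 0 < (ψ ρ : ℝ) := fun ρ hρ => hlow.pos hc hρ
  have hA : 0 < (ψ r : ℝ) / t := div_pos (hψ₀ r hr) ht
  have hbdd := hlow.bddAbove_range hc hβ₁ (by positivity : 0 ≤ γ * r) ht
  rw [phiConst_mul_rpow hc (by linarith) hγ hA.le]
  set l := (γ * ((ψ r : ℝ) / t) / (c * β₂)) ^ (β₂ - 1)⁻¹
  have hl₀ : 0 < l := by positivity
  have hβ : 0 < 1 - β₂⁻¹ := sub_pos.2 (inv_lt_one_of_one_lt₀ hβ₂)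
  rcases le_or_gt 1 l with hl | hl
  · have hopt := mul_sub_rpow_div_eq_of_rpow_eq hc.ne' (by linarith) hA.ne' hl₀.ne'
      (Real.rpow_inv_rpow (by positivity) (by linarith))
    have := hup.le_Phi hψ₀ hr ht.le hbdd hl
    linarith
  · have := neg_one_le_Phi hbdd (by positivity) (hlow.exists_le_apply hc (by linarith) t)
    have : γ * (1 - β₂⁻¹) * l ≤ γ * 1 * 1 := by
      gcongr
      exact sub_le_self 1 (by positivity)
    linarith

/-- For every `γ ∈ (0,∞)` there exist `c', γ' ∈ (0,∞)`, depending only on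
`c_Ψ, β₁, β₂, γ`, such that `exp(-Φ(γr,t)) ≤ c' exp(-γ'(Ψ(r)/t)^{1/(β₂-1)})` for all
`r, t ∈ (0,∞)`, where `Φ(R,t) = sup_{ρ>0} (R/ρ - t/Ψ(ρ))`. -/
theorem dynkin_hunt_stmt15 (cΨ β₁ β₂ γ : ℝ)
    (hcΨ : 0 < cΨ) (hβ₁ : 1 < β₁) (hβ₁₂ : β₁ ≤ β₂) (hγ : 0 < γ) :
    ∃ c' γ' : ℝ, 0 < c' ∧ 0 < γ' ∧
      ∀ Ψ : ℝ≥0 ≃ₜ ℝ≥0,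
        (∀ r R : ℝ≥0, 0 < r → r ≤ R →
          cΨ⁻¹ * ((R : ℝ) / (r : ℝ)) ^ β₁ ≤ ((Ψ R : ℝ≥0) : ℝ) / ((Ψ r : ℝ≥0) : ℝ) ∧
          ((Ψ R : ℝ≥0) : ℝ) / ((Ψ r : ℝ≥0) : ℝ) ≤ cΨ * ((R : ℝ) / (r : ℝ)) ^ β₂) →
        ∀ (r : ℝ≥0) (t : ℝ), 0 < r → 0 < t →
          Real.exp (-(⨆ ρ : {ρ : ℝ≥0 // 0 < ρ},
              (γ * (r : ℝ) / (ρ.1 : ℝ) - t / ((Ψ ρ.1 : ℝ≥0) : ℝ))))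
            ≤ c' * Real.exp (-(γ' * (((Ψ r : ℝ≥0) : ℝ) / t) ^ (β₂ - 1)⁻¹)) := by
  have hβ₂ : 1 < β₂ := hβ₁.trans_le hβ₁₂
  refine ⟨Real.exp (γ + 1), phiConst cΨ β₂ γ, Real.exp_pos _, phiConst_pos hcΨ hβ₂ hγ, ?_⟩
  intro Ψ hΨ r t hr ht
  have key : _ ≤ Phi Ψ (γ * r) t := phiConst_mul_rpow_sub_le_Phi hcΨ hβ₁ hβ₂ hγ
    (fun r R hr h => (hΨ r R hr h).1) (fun r R hr h => (hΨ r R hr h).2) hr ht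
  rw [← Real.exp_add]
  exact Real.exp_le_exp.2 (by unfold Phi at key; linarith)
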